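/- (Bound (geh.2) on the Pauli–Fierz effective potential) For θ ∈ ℂ with |θ| < 1/2 define V_PF(θ)(x) := e^{−θ} · ∑_{λ∈{0,1}} (1/(2(2π)³)) ∫_{ℝ³} exp(−2 e^{−2θ} |k|²) · | η(|x||k|) · (ε(k,λ) · x) |² d³k, where ε(k,λ)·x is the (bilinear) dot product of ε(k,λ) ∈ ℂ³ with x ∈ ℝ³ and |·| is the modulus in ℂ. Then for every x ∈ ℝ³: |V_PF(θ)(x)| ≤ |x|², and for every x ∈ ℝ³ ∖ {0}: |V_PF(θ)(x)| ≤ 1/|x|. -/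

import Mathlib

open MeasureTheory

noncomputable section

/-- `ℝ³` as a Euclidean space. -/
abbrev R3 : Type := EuclideanSpace ℝ (Fin 3)

/-- The polarization vectors form an a.e. orthonormal transversal family. -/
def Polarization (ε : R3 → Fin 2 → Fin 3 → ℂ) : Prop :=
  Measurable ε ∧
  ∀ᵐ k ∂(volume : Measure R3), k ≠ 0 →
    ∀ lam mu : Fin 2,
      (∑ j : Fin 3, (starRingEnd ℂ) (ε k lam j) * ε k mu j) = (if lam = mu then 1 else 0) ∧
      (∑ j : Fin 3, ((k j : ℝ) : ℂ) * ε k lam j) = 0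

/-- The cutoff function `η`: smooth, nonincreasing on `[0,∞)`, `η = 1` on `(-∞,1]`,
`η = 0` on `[2,∞)`. -/
def Cutoff (η : ℝ → ℝ) : Prop :=
  ContDiff ℝ (⊤ : ℕ∞) η ∧ AntitoneOn η (Set.Ici 0) ∧ (∀ r : ℝ, r ≤ 1 → η r = 1) ∧
    (∀ r : ℝ, 2 ≤ r → η r = 0)

/-- The Pauli–Fierz effective potential `V_PF(θ)(x)`. -/
def VPF (ε : R3 → Fin 2 → Fin 3 → ℂ) (η : ℝ → ℝ) (θ : ℂ) (x : R3) : ℂ :=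
  Complex.exp (-θ) * ∑ lam : Fin 2,
    ((1 / (2 * (2 * Real.pi) ^ 3) : ℝ) : ℂ) *
      ∫ k : R3,
        Complex.exp (-2 * Complex.exp (-(2*θ)) * ((‖k‖ ^ 2 : ℝ) : ℂ)) *
          ((‖(((η (‖x‖ * ‖k‖) : ℝ) : ℂ) *
              ∑ j : Fin 3, ε k lam j * ((x j : ℝ) : ℂ))‖ ^ 2 : ℝ) : ℂ)

set_option maxHeartbeats 1000000 in
/-- Bound (geh.2) on the Pauli–Fierz effective potential. -/
theorem VPF_bound
    (ε : R3 → Fin 2 → Fin 3 → ℂ) (hε : Polarization ε)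
    (η : ℝ → ℝ) (hη : Cutoff η)
    (θ : ℂ) (hθ : ‖θ‖ < 1/2) (x : R3) :
    ‖VPF ε η θ x‖ ≤ ‖x‖ ^ 2 ∧
    (x ≠ 0 → ‖VPF ε η θ x‖ ≤ 1 / ‖x‖) := by
  obtain ⟨hεm, hεae⟩ := hε
  obtain ⟨hη1, hη2, hη3, hη4⟩ := hη
  have hπ : (3:ℝ) < Real.pi := Real.pi_gt_three
  have hπ0 : (0:ℝ) < Real.pi := Real.pi_pos
  -- cutoff bounds
  have hη01 : ∀ r : ℝ, 0 ≤ r → 0 ≤ η r ∧ η r ≤ 1 := by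
    intro r hr
    constructor
    · rcases le_total 2 r with h | h
      · rw [hη4 r h]
      · have := hη2 (Set.mem_Ici.2 hr) (Set.mem_Ici.2 (by norm_num : (0:ℝ) ≤ 2)) h
        rwa [hη4 2 le_rfl] at this
    · rcases le_total r 1 with h | h
      · rw [hη3 r h]
      · have := hη2 (Set.mem_Ici.2 (by norm_num : (0:ℝ) ≤ 1)) (Set.mem_Ici.2 hr) h
        rwa [hη3 1 le_rfl] at this
  -- prefactor bound
  have hexpθ : ‖(Complex.exp (-θ))‖ ≤ 2 := by
    rw [Complex.norm_exp]
    have hre : |θ.re| < 1/2 := lt_of_le_of_lt (Complex.abs_re_le_norm θ) hθ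
    have h1 : (-θ).re ≤ 1/2 := by
      rw [Complex.neg_re]
      have := (abs_le.1 hre.le).1
      linarith
    have h2 : Real.exp (1/2 : ℝ) ≤ 2 := by
      have h3 : Real.exp (1/2 : ℝ) * Real.exp (1/2 : ℝ) = Real.exp 1 := by
        rw [← Real.exp_add]; norm_num
      nlinarith [Real.exp_pos (1/2 : ℝ), Real.exp_one_lt_d9]
    exact le_trans (Real.exp_le_exp.2 h1) h2
  -- the decay rate
  set a : ℝ := 2 * (Complex.exp (-(2*θ))).re with ha
  have haq : (1/4 : ℝ) ≤ a := by
    have him : |θ.im| < 1/2 := lt_of_le_of_lt (Complex.abs_im_le_norm θ) hθ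
    have hre : |θ.re| < 1/2 := lt_of_le_of_lt (Complex.abs_re_le_norm θ) hθ
    have hwre : (Complex.exp (-(2*θ))).re
        = Real.exp ((-(2*θ)).re) * Real.cos ((-(2*θ)).im) := Complex.exp_re _
    have h1 : (-(2*θ)).re = -(2*θ.re) := by simp
    have h2 : (-(2*θ)).im = -(2*θ.im) := by simp
    have hcos : (1/2 : ℝ) ≤ Real.cos (-(2*θ.im)) := by
      have hc := Real.one_sub_sq_div_two_le_cos (x := -(2*θ.im))
      have : θ.im^2 < 1/4 := by nlinarith [sq_abs θ.im, abs_nonneg θ.im]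
      nlinarith
    have hexpre : Real.exp (-1 : ℝ) ≤ Real.exp (-(2*θ.re)) := by
      apply Real.exp_le_exp.2
      have := (abs_le.1 hre.le).2
      linarith
    have hexpge : (1/3 : ℝ) ≤ Real.exp (-1 : ℝ) := by
      rw [Real.exp_neg]
      have h3 : Real.exp 1 ≤ 3 := by nlinarith [Real.exp_one_lt_d9]
      calc (1/3 : ℝ) = 3⁻¹ := by norm_num
        _ ≤ (Real.exp 1)⁻¹ := by
            apply inv_anti₀ (Real.exp_pos 1) h3
    rw [ha, hwre, h1, h2]
    have hmul : (1/3 : ℝ) * (1/2) ≤ Real.exp (-(2*θ.re)) * Real.cos (-(2*θ.im)) :=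
      mul_le_mul (le_trans hexpge hexpre) hcos (by norm_num) (Real.exp_pos _).le
    nlinarith
  have ha0 : (0:ℝ) < a := lt_of_lt_of_le (by norm_num) haq
  -- trivial case x = 0
  rcases eq_or_ne x 0 with rfl | hx
  · have h0 : VPF ε η θ 0 = 0 := by
      simp [VPF]
    rw [h0]
    constructor
    · simp
    · intro h; exact absurd rfl h
  have hx0 : (0:ℝ) < ‖x‖ := norm_pos_iff.2 hx
  -- the integrand
  set F : Fin 2 → R3 → ℂ := fun lam k =>
    Complex.exp (-2 * Complex.exp (-(2*θ)) * ((‖k‖ ^ 2 : ℝ) : ℂ)) *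
      ((‖(((η (‖x‖ * ‖k‖) : ℝ) : ℂ) *
          ∑ j : Fin 3, ε k lam j * ((x j : ℝ) : ℂ))‖ ^ 2 : ℝ) : ℂ) with hF
  have hVPF : VPF ε η θ x = Complex.exp (-θ) *
      ∑ lam : Fin 2, ((1 / (2 * (2 * Real.pi) ^ 3) : ℝ) : ℂ) * ∫ k : R3, F lam k := rfl
  -- pointwise norm of the integrand
  have hnorm : ∀ (lam : Fin 2) (k : R3), ‖F lam k‖ =
      Real.exp (-(a * ‖k‖^2)) *
        (‖(((η (‖x‖ * ‖k‖) : ℝ) : ℂ) *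
          ∑ j : Fin 3, ε k lam j * ((x j : ℝ) : ℂ))‖)^2 := by
    intro lam k
    rw [hF]
    rw [norm_mul, Complex.norm_exp, Complex.norm_real,
      Real.norm_eq_abs, abs_of_nonneg (sq_nonneg _)]
    congr 1
    have hre : ∀ t : ℝ, (-2 * Complex.exp (-(2*θ)) * (t : ℂ)).re = -(a * t) := by
      intro t
      simp [Complex.mul_re, Complex.mul_im, ha]
    rw [hre (‖k‖^2)]
  -- a.e. bound on the matrix element
  have h0ae : ∀ᵐ k : R3, k ≠ 0 := by
    rw [ae_iff]
    have h : {k : R3 | ¬ k ≠ 0} = {0} := by ext k; simp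
    rw [h]; exact measure_singleton 0
  have hxsum : ∑ j : Fin 3, (x j)^2 = ‖x‖^2 := by
    rw [EuclideanSpace.norm_eq, Real.sq_sqrt (by positivity)]
    exact Finset.sum_congr rfl fun j _ => by rw [Real.norm_eq_abs, sq_abs]
  have hΦle : ∀ᵐ k : R3, ∀ lam : Fin 2,
      (‖(((η (‖x‖ * ‖k‖) : ℝ) : ℂ) *
        ∑ j : Fin 3, ε k lam j * ((x j : ℝ) : ℂ))‖)^2 ≤ ‖x‖^2 := by
    filter_upwards [hεae, h0ae] with k hk hk0
    intro lam
    obtain ⟨horth, -⟩ := hk hk0 lam lam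
    rw [if_pos rfl] at horth
    have hsum1 : ∑ j : Fin 3, ‖(ε k lam j)‖^2 = 1 := by
      have h2 : ((∑ j : Fin 3, ‖(ε k lam j)‖^2 : ℝ) : ℂ) = 1 := by
        push_cast
        rw [← horth]
        refine Finset.sum_congr rfl fun j _ => ?_
        rw [← Complex.ofReal_pow, Complex.sq_norm, Complex.normSq_eq_conj_mul_self]
      exact_mod_cast h2
    have hS : ‖(∑ j : Fin 3, ε k lam j * ((x j : ℝ) : ℂ))‖ ≤ ‖x‖ := by
      have h1 : ‖(∑ j : Fin 3, ε k lam j * ((x j : ℝ) : ℂ))‖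
          ≤ ∑ j : Fin 3, ‖(ε k lam j)‖ * |x j| := by
        refine le_trans (norm_sum_le _ _) (le_of_eq ?_)
        exact Finset.sum_congr rfl fun j _ => by rw [norm_mul, Complex.norm_real, Real.norm_eq_abs]
      have h2 : (∑ j : Fin 3, ‖(ε k lam j)‖ * |x j|)^2 ≤ ‖x‖^2 := by
        calc (∑ j : Fin 3, ‖(ε k lam j)‖ * |x j|)^2
            ≤ (∑ j : Fin 3, ‖(ε k lam j)‖^2) * (∑ j : Fin 3, |x j|^2) :=
              Finset.sum_mul_sq_le_sq_mul_sq _ _ _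
          _ = ‖x‖^2 := by
              rw [hsum1, one_mul, ← hxsum]
              exact Finset.sum_congr rfl fun j _ => by rw [sq_abs]
      have h3 : (0:ℝ) ≤ ∑ j : Fin 3, ‖(ε k lam j)‖ * |x j| :=
        Finset.sum_nonneg fun j _ => by positivity
      nlinarith [hx0.le, h1, h2, h3, norm_nonneg (∑ j : Fin 3, ε k lam j * ((x j : ℝ) : ℂ))]
    have hηb := hη01 (‖x‖ * ‖k‖) (by positivity)
    have hηabs : |η (‖x‖ * ‖k‖)| ≤ 1 := abs_le.2 ⟨by linarith [hηb.1], hηb.2⟩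
    rw [norm_mul, Complex.norm_real, Real.norm_eq_abs]
    calc (|η (‖x‖ * ‖k‖)| * ‖(∑ j : Fin 3, ε k lam j * ((x j : ℝ) : ℂ))‖)^2
        = |η (‖x‖ * ‖k‖)|^2 * (‖(∑ j : Fin 3, ε k lam j * ((x j : ℝ) : ℂ))‖)^2 := by
          ring
      _ ≤ 1 * ‖x‖^2 := by
          refine mul_le_mul ?_ (pow_le_pow_left₀ (norm_nonneg _) hS 2) (sq_nonneg _)
            (by norm_num)
          calc |η (‖x‖ * ‖k‖)|^2 ≤ 1^2 := pow_le_pow_left₀ (abs_nonneg _) hηabs 2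
            _ = 1 := one_pow 2
      _ = ‖x‖^2 := one_mul _
  -- the master estimate
  have hc0 : (0:ℝ) ≤ 1 / (2 * (2 * Real.pi) ^ 3) := by positivity
  have main : ∀ (g : R3 → ℝ) (M : ℝ), Integrable g →
      (∀ᵐ k : R3, ∀ lam : Fin 2, ‖F lam k‖ ≤ g k) → (∫ k : R3, g k) ≤ M →
      ‖(VPF ε η θ x)‖ ≤ 2 * (2 * ((1 / (2 * (2 * Real.pi) ^ 3)) * M)) := by
    intro g M hgi hb hM
    have hIl : ∀ lam : Fin 2, ‖(∫ k : R3, F lam k)‖ ≤ M := by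
      intro lam
      refine (norm_integral_le_integral_norm _).trans (le_trans ?_ hM)
      refine integral_mono_of_nonneg (Filter.Eventually.of_forall fun k => norm_nonneg _) hgi ?_
      filter_upwards [hb] with k hk using hk lam
    rw [hVPF, norm_mul]
    refine mul_le_mul hexpθ ?_ (norm_nonneg _) (by norm_num)
    calc ‖(∑ lam : Fin 2, ((1 / (2 * (2 * Real.pi) ^ 3) : ℝ) : ℂ) * ∫ k : R3, F lam k)‖
        ≤ ∑ lam : Fin 2, ‖(((1 / (2 * (2 * Real.pi) ^ 3) : ℝ) : ℂ) * ∫ k : R3, F lam k)‖ :=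
          norm_sum_le _ _
      _ ≤ ∑ _lam : Fin 2, (1 / (2 * (2 * Real.pi) ^ 3)) * M := by
          refine Finset.sum_le_sum fun lam _ => ?_
          rw [norm_mul, Complex.norm_real, Real.norm_eq_abs, abs_of_nonneg hc0]
          exact mul_le_mul_of_nonneg_left (hIl lam) hc0
      _ = 2 * ((1 / (2 * (2 * Real.pi) ^ 3)) * M) := by
          rw [Finset.sum_const, Finset.card_univ, Fintype.card_fin, nsmul_eq_mul]
          norm_num
  -- arithmetic reduction
  have key : ∀ M B : ℝ, M ≤ 4 * Real.pi^3 * B →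
      2 * (2 * ((1 / (2 * (2 * Real.pi) ^ 3)) * M)) ≤ B := by
    intro M B h
    have heq : 2 * (2 * ((1 / (2 * (2 * Real.pi) ^ 3)) * M)) = M / (4 * Real.pi^3) := by
      field_simp
      ring
    rw [heq, div_le_iff₀ (by positivity)]
    calc M ≤ 4 * Real.pi^3 * B := h
      _ = B * (4 * Real.pi^3) := by ring
  constructor
  · -- Gaussian bound
    have hgi : Integrable (fun k : R3 => ‖x‖^2 * Real.exp (-((1/4 : ℝ) * ‖k‖^2))) := by
      refine Integrable.const_mul ?_ _
      have h := (GaussianFourier.integrable_cexp_neg_mul_sq_norm_add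
        (V := R3) (b := ((1/4 : ℝ) : ℂ)) (by norm_num) 0 0).norm
      refine h.congr (Filter.Eventually.of_forall fun k => ?_)
      simp [Complex.norm_exp, ← Complex.ofReal_pow]
    set t : ℝ := (Real.pi / (1/4 : ℝ)) ^ ((3:ℝ)/2) with htdef
    have hInt1 : (∫ k : R3, ‖x‖^2 * Real.exp (-((1/4 : ℝ) * ‖k‖^2))) = ‖x‖^2 * t := by
      rw [integral_const_mul]
      congr 1
      rw [show (fun k : R3 => Real.exp (-((1/4 : ℝ) * ‖k‖^2)))
          = fun k : R3 => Real.exp (-(1/4 : ℝ) * ‖k‖^2) by funext k; ring_nf,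
        GaussianFourier.integral_rexp_neg_mul_sq_norm (by norm_num : (0:ℝ) < 1/4)]
      norm_num [finrank_euclideanSpace_fin, htdef]
    have hb1 : ∀ᵐ k : R3, ∀ lam : Fin 2, ‖F lam k‖ ≤ ‖x‖^2 * Real.exp (-((1/4 : ℝ) * ‖k‖^2)) := by
      filter_upwards [hΦle] with k hk
      intro lam
      rw [hnorm lam k]
      have h1 : Real.exp (-(a * ‖k‖^2)) ≤ Real.exp (-((1/4 : ℝ) * ‖k‖^2)) := by
        apply Real.exp_le_exp.2
        nlinarith [sq_nonneg ‖k‖]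
      calc Real.exp (-(a * ‖k‖^2)) *
            (‖(((η (‖x‖ * ‖k‖) : ℝ) : ℂ) *
              ∑ j : Fin 3, ε k lam j * ((x j : ℝ) : ℂ))‖)^2
          ≤ Real.exp (-((1/4 : ℝ) * ‖k‖^2)) * ‖x‖^2 :=
            mul_le_mul h1 (hk lam) (sq_nonneg _) (Real.exp_pos _).le
        _ = ‖x‖^2 * Real.exp (-((1/4 : ℝ) * ‖k‖^2)) := mul_comm _ _
    have ht0 : (0:ℝ) ≤ t := Real.rpow_nonneg (by positivity) _
    have ht2 : t^2 = (4 * Real.pi)^3 := by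
      rw [htdef, ← Real.rpow_natCast ((Real.pi / (1/4:ℝ)) ^ ((3:ℝ)/2)) 2,
        ← Real.rpow_mul (by positivity)]
      norm_num
      congr 1
      ring
    have ht2' : t^2 = 64 * Real.pi^3 := by rw [ht2]; ring
    have hπ3 : (27:ℝ) ≤ Real.pi^3 := by
      calc (27:ℝ) = 3^3 := by norm_num
        _ ≤ Real.pi^3 := pow_le_pow_left₀ (by norm_num) hπ.le 3
    have h64 : 64 * Real.pi^3 ≤ 16 * Real.pi^6 := by
      nlinarith [hπ3, pow_pos hπ0 3]
    have htle : t ≤ 4 * Real.pi^3 := by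
      calc t = Real.sqrt (t^2) := (Real.sqrt_sq ht0).symm
        _ ≤ Real.sqrt ((4 * Real.pi^3)^2) := Real.sqrt_le_sqrt (by nlinarith [ht2', h64])
        _ = 4 * Real.pi^3 := Real.sqrt_sq (by positivity)
    refine le_trans (main _ (‖x‖^2 * t) hgi hb1 hInt1.le) (key _ _ ?_)
    calc ‖x‖^2 * t ≤ ‖x‖^2 * (4 * Real.pi^3) := by gcongr
      _ = 4 * Real.pi^3 * ‖x‖^2 := by ring
  · -- ball bound
    intro _
    set R : ℝ := 2 / ‖x‖ with hRdef
    have hR0 : (0:ℝ) < R := by positivity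
    set g : R3 → ℝ := Set.indicator (Metric.closedBall (0:R3) R) (fun _ => ‖x‖^2) with hgdef
    have hgi : Integrable g := by
      rw [hgdef, integrable_indicator_iff measurableSet_closedBall]
      exact integrableOn_const measure_closedBall_lt_top.ne
    have hΓ : Real.Gamma ((3:ℝ)/2 + 1) = 3/4 * Real.sqrt Real.pi := by
      rw [Real.Gamma_add_one (by norm_num), show (3:ℝ)/2 = 1/2 + 1 by norm_num,
        Real.Gamma_add_one (by norm_num), Real.Gamma_one_half_eq]
      ring
    have hsqpi : Real.sqrt Real.pi ^ 3 = Real.pi * Real.sqrt Real.pi := by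
      rw [pow_succ, Real.sq_sqrt hπ0.le]
    have hvol : (volume (Metric.closedBall (0:R3) R)).toReal = R^3 * (4/3 * Real.pi) := by
      rw [EuclideanSpace.volume_closedBall]
      have hcard : (Fintype.card (Fin 3)) = 3 := Fintype.card_fin 3
      rw [hcard]
      have hconst : Real.sqrt Real.pi ^ 3 / Real.Gamma ((3:ℕ)/2 + 1) = 4/3 * Real.pi := by
        have h3 : ((3:ℕ):ℝ)/2 + 1 = (3:ℝ)/2 + 1 := by norm_num
        rw [h3, hΓ, hsqpi]
        have hsqrtne : Real.sqrt Real.pi ≠ 0 := by positivity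
        field_simp
      rw [hconst]
      rw [ENNReal.toReal_mul, ENNReal.toReal_pow, ENNReal.toReal_ofReal hR0.le,
        ENNReal.toReal_ofReal (by positivity)]
    have hInt2 : (∫ k : R3, g k) = R^3 * (4/3 * Real.pi) * ‖x‖^2 := by
      rw [hgdef, integral_indicator_const _ measurableSet_closedBall, measureReal_def, hvol, smul_eq_mul]
    have hb2 : ∀ᵐ k : R3, ∀ lam : Fin 2, ‖F lam k‖ ≤ g k := by
      filter_upwards [hΦle] with k hk
      intro lam
      rw [hnorm lam k]
      by_cases hmem : k ∈ Metric.closedBall (0:R3) R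
      · rw [hgdef, Set.indicator_of_mem hmem]
        have h1 : Real.exp (-(a * ‖k‖^2)) ≤ 1 := by
          rw [Real.exp_le_one_iff]
          nlinarith [sq_nonneg ‖k‖]
        calc Real.exp (-(a * ‖k‖^2)) *
              (‖(((η (‖x‖ * ‖k‖) : ℝ) : ℂ) *
                ∑ j : Fin 3, ε k lam j * ((x j : ℝ) : ℂ))‖)^2
            ≤ 1 * ‖x‖^2 := mul_le_mul h1 (hk lam) (sq_nonneg _) (by norm_num)
          _ = ‖x‖^2 := one_mul _
      · rw [hgdef, Set.indicator_of_notMem hmem]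
        rw [Metric.mem_closedBall, dist_zero_right] at hmem
        push_neg at hmem
        have hk2 : 2 ≤ ‖x‖ * ‖k‖ := by
          have hxR : ‖x‖ * R = 2 := by
            rw [hRdef]; field_simp
          nlinarith [hx0, hmem]
        rw [hη4 _ hk2]
        simp
    have hM2 : R^3 * (4/3 * Real.pi) * ‖x‖^2 ≤ 4 * Real.pi^3 * (1/‖x‖) := by
      have heq : R^3 * (4/3 * Real.pi) * ‖x‖^2 = (32 * Real.pi / 3) * (1/‖x‖) := by
        rw [hRdef]
        field_simp
        ring
      rw [heq]
      have hπ2 : (9:ℝ) ≤ Real.pi^2 := by nlinarith [hπ, hπ0]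
      have h32 : 32 * Real.pi / 3 ≤ 4 * Real.pi^3 := by nlinarith [hπ2, hπ0]
      have hinv : (0:ℝ) ≤ 1/‖x‖ := by positivity
      exact mul_le_mul_of_nonneg_right h32 hinv
    exact le_trans (main g _ hgi hb2 hInt2.le) (key _ _ hM2)

end
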